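/- arXiv:1612.01767 — 2 statements merged into one kernel-verified Lean document; each statement's English description precedes it below -/
import Mathlib

section
/- Let A and B be nonnegative n×n real matrices. Then ‖A^{(1/2)} ∘ B^{(1/2)}‖ ≤ ρ((AᵀB)^{(1/2)} ∘ (BᵀA)^{(1/2)})^{1/2} ≤ ρ(AᵀB)^{1/2}, where ‖·‖ is the Euclidean operator norm. -/
/-!
Write `G(P, Q) = P^(1/2) ∘ Q^(1/2)`. For nonnegative matrices, Cauchy–Schwarz in each entry gives
`G(P, Q) G(R, T) ≤ G(PR, QT)` entrywise. Hence `CᵀC ≤ G(AᵀB, BᵀA)` for `C = G(A, B)`, and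
`G(M, Mᵀ)ⁿ ≤ G(Mⁿ, (Mᵀ)ⁿ) ≤ (Mⁿ + (Mᵀ)ⁿ) / 2` by AM–GM. The ℓ∞ operator norm is monotone in
the entries of nonnegative matrices, so Gelfand's formula turns these entrywise bounds into
`ρ(CᵀC) ≤ ρ(G(AᵀB, BᵀA)) ≤ max (ρ M) (ρ Mᵀ) = ρ M` for `M = AᵀB`. Finally `‖C‖² ≤ ρ(CᵀC)`
because, in the complex C⋆-algebra of matrices, `CᵀC` is self-adjoint with norm `‖C‖²`.
-/

open Matrix

/-- Spectral radius of a real matrix: max modulus of its (complex) eigenvalues. -/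
noncomputable def specRad {N : Type*} [Fintype N] [DecidableEq N] (A : Matrix N N ℝ) : ℝ :=
  (spectralRadius ℂ (A.map Complex.ofReal)).toReal

/-- Operator norm induced by the Euclidean (ℓ²) norm. -/
noncomputable def l2OpNorm {N : Type*} [Fintype N] [DecidableEq N] (A : Matrix N N ℝ) : ℝ :=
  ‖Matrix.toEuclideanCLM (𝕜 := ℝ) A‖

/-- Entrywise α-th power (with the convention 0^0 = 1, as for `Real.rpow`). -/
noncomputable def hadPow {N : Type*} (A : Matrix N N ℝ) (α : ℝ) : Matrix N N ℝ :=
  fun i j => A i j ^ α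

section BanachAlgebra

lemma spectralRadius_ne_top {𝕜 A : Type*} [NormedField 𝕜] [NormedRing A] [NormedAlgebra 𝕜 A]
    [CompleteSpace A] (a : A) : spectralRadius 𝕜 a ≠ ⊤ := by
  refine ((spectrum.spectralRadius_le_pow_nnnorm_pow_one_div 𝕜 a 0).trans_lt ?_).ne
  simp [ENNReal.mul_lt_top]

variable {A : Type*} [NormedRing A] [NormedAlgebra ℂ A] [CompleteSpace A]

lemma spectralRadius_le_max_of_nnnorm_pow_le {a b c : A}
    (h : ∀ n : ℕ, ‖a ^ n‖₊ ≤ max ‖b ^ n‖₊ ‖c ^ n‖₊) :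
    spectralRadius ℂ a ≤ max (spectralRadius ℂ b) (spectralRadius ℂ c) := by
  refine le_of_tendsto_of_tendsto'
    (spectrum.pow_nnnorm_pow_one_div_tendsto_nhds_spectralRadius a)
    ((spectrum.pow_nnnorm_pow_one_div_tendsto_nhds_spectralRadius b).max
      (spectrum.pow_nnnorm_pow_one_div_tendsto_nhds_spectralRadius c)) fun n => ?_
  rw [← (ENNReal.monotone_rpow_of_nonneg (by positivity)).map_max]
  exact ENNReal.rpow_le_rpow (mod_cast h n) (by positivity)

end BanachAlgebra

namespace Matrix

variable {N : Type*}

noncomputable def hadGeomMean (P Q : Matrix N N ℝ) : Matrix N N ℝ :=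
  hadPow P (1 / 2) ⊙ hadPow Q (1 / 2)

section GeomMean

variable {P Q : Matrix N N ℝ}

lemma hadGeomMean_apply (P Q : Matrix N N ℝ) (i j : N) :
    hadGeomMean P Q i j = √(P i j) * √(Q i j) := by
  simp only [hadGeomMean, hadPow, hadamard_apply, Real.sqrt_eq_rpow]

lemma hadGeomMean_nonneg (P Q : Matrix N N ℝ) (i j : N) : 0 ≤ hadGeomMean P Q i j := by
  rw [hadGeomMean_apply]
  positivity

lemma hadGeomMean_comm (P Q : Matrix N N ℝ) : hadGeomMean P Q = hadGeomMean Q P :=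
  hadamard_comm _ _

lemma hadGeomMean_transpose (P Q : Matrix N N ℝ) :
    (hadGeomMean P Q)ᵀ = hadGeomMean Pᵀ Qᵀ :=
  rfl

lemma hadGeomMean_self (hP : ∀ i j, 0 ≤ P i j) : hadGeomMean P P = P := by
  ext i j
  rw [hadGeomMean_apply, Real.mul_self_sqrt (hP i j)]

lemma hadGeomMean_apply_le_add_div_two (hP : ∀ i j, 0 ≤ P i j) (hQ : ∀ i j, 0 ≤ Q i j)
    (i j : N) : hadGeomMean P Q i j ≤ (P i j + Q i j) / 2 := by
  have amgm := Real.geom_mean_le_arith_mean2_weighted (w₁ := 1 / 2) (w₂ := 1 / 2)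
    (by norm_num) (by norm_num) (hP i j) (hQ i j) (by norm_num)
  simp only [hadGeomMean, hadPow, hadamard_apply]
  linarith

end GeomMean

variable [Fintype N]

lemma spectrum_transpose [DecidableEq N] {R : Type*} [CommRing R] (X : Matrix N N R) :
    spectrum R Xᵀ = spectrum R X := by
  ext z
  rw [spectrum.mem_iff, spectrum.mem_iff, ← isUnit_transpose, transpose_sub,
    transpose_transpose, algebraMap_eq_diagonal, diagonal_transpose]

lemma specRad_transpose [DecidableEq N] (X : Matrix N N ℝ) : specRad Xᵀ = specRad X := by
  rw [specRad, specRad, transpose_map, spectralRadius, spectralRadius, spectrum_transpose]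

section Entrywise

variable {X Y Z W : Matrix N N ℝ}

lemma mul_apply_nonneg (hX : ∀ i j, 0 ≤ X i j) (hY : ∀ i j, 0 ≤ Y i j) (i j : N) :
    0 ≤ (X * Y) i j :=
  Finset.sum_nonneg fun k _ => mul_nonneg (hX i k) (hY k j)

lemma mul_apply_le_mul_apply (hX : ∀ i j, 0 ≤ X i j) (hZ : ∀ i j, 0 ≤ Z i j)
    (hXY : ∀ i j, X i j ≤ Y i j) (hZW : ∀ i j, Z i j ≤ W i j) (i j : N) :
    (X * Z) i j ≤ (Y * W) i j :=
  Finset.sum_le_sum fun k _ =>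
    mul_le_mul (hXY i k) (hZW k j) (hZ k j) ((hX i k).trans (hXY i k))

lemma pow_apply_le_pow_apply [DecidableEq N] (hX : ∀ i j, 0 ≤ X i j)
    (hXY : ∀ i j, X i j ≤ Y i j) (n : ℕ) (i j : N) : (X ^ n) i j ≤ (Y ^ n) i j := by
  induction n generalizing i j with
  | zero => rfl
  | succ n ih =>
    rw [pow_succ, pow_succ]
    exact mul_apply_le_mul_apply (pow_apply_nonneg hX n) hX ih hXY i j

variable {P Q R T : Matrix N N ℝ}

lemma mul_hadGeomMean_apply_le (hP : ∀ i j, 0 ≤ P i j) (hQ : ∀ i j, 0 ≤ Q i j)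
    (hR : ∀ i j, 0 ≤ R i j) (hT : ∀ i j, 0 ≤ T i j) (i j : N) :
    (hadGeomMean P Q * hadGeomMean R T) i j ≤ hadGeomMean (P * R) (Q * T) i j := by
  simp only [mul_apply, hadGeomMean_apply]
  calc ∑ k, √(P i k) * √(Q i k) * (√(R k j) * √(T k j))
      = ∑ k, √(P i k * R k j) * √(Q i k * T k j) := by
        refine Finset.sum_congr rfl fun k _ => ?_
        rw [Real.sqrt_mul (hP i k), Real.sqrt_mul (hQ i k)]
        ring
    _ ≤ _ := Real.sum_sqrt_mul_sqrt_le _ (fun k => mul_nonneg (hP i k) (hR k j))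
        (fun k => mul_nonneg (hQ i k) (hT k j))

lemma hadGeomMean_pow_apply_le [DecidableEq N] (hP : ∀ i j, 0 ≤ P i j)
    (hQ : ∀ i j, 0 ≤ Q i j) (n : ℕ) (i j : N) :
    (hadGeomMean P Q ^ n) i j ≤ hadGeomMean (P ^ n) (Q ^ n) i j := by
  induction n generalizing i j with
  | zero =>
    have one_nonneg : ∀ i j, 0 ≤ (1 : Matrix N N ℝ) i j := by simpa using pow_apply_nonneg hP 0
    rw [pow_zero, pow_zero, pow_zero, hadGeomMean_self one_nonneg]
  | succ n ih =>
    rw [pow_succ, pow_succ, pow_succ]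
    exact (mul_apply_le_mul_apply (pow_apply_nonneg (hadGeomMean_nonneg P Q) n)
      (hadGeomMean_nonneg P Q) ih (fun _ _ => le_rfl) i j).trans
      (mul_hadGeomMean_apply_le (pow_apply_nonneg hP n) (pow_apply_nonneg hQ n) hP hQ i j)

end Entrywise

section LinftyNorm

attribute [local instance] Matrix.linftyOpSeminormedAddCommGroup Matrix.linftyOpNormedRing
  Matrix.linftyOpNormedAlgebra Matrix.linftyOpNormedSpace

lemma linfty_opNNNorm_mono {α : Type*} [SeminormedAddCommGroup α] {X Y : Matrix N N α}
    (h : ∀ i j, ‖X i j‖₊ ≤ ‖Y i j‖₊) : ‖X‖₊ ≤ ‖Y‖₊ := by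
  simp only [linfty_opNNNorm_def]
  exact Finset.sup_mono_fun fun i _ => Finset.sum_le_sum fun j _ => h i j

lemma linfty_opNNNorm_map_ofReal (X : Matrix N N ℝ) : ‖X.map Complex.ofReal‖₊ = ‖X‖₊ := by
  simp only [linfty_opNNNorm_def, map_apply, Complex.nnnorm_real]

lemma linfty_opNNNorm_le_max_of_apply_le_add_div_two {X P Q : Matrix N N ℝ}
    (hX : ∀ i j, 0 ≤ X i j) (h : ∀ i j, X i j ≤ (P i j + Q i j) / 2) :
    ‖X‖₊ ≤ max ‖P‖₊ ‖Q‖₊ := by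
  have le_half_sum : ‖X‖₊ ≤ ‖(2⁻¹ : ℝ) • (P + Q)‖₊ := linfty_opNNNorm_mono fun i j => by
    rw [← NNReal.coe_le_coe, coe_nnnorm, coe_nnnorm, Real.norm_of_nonneg (hX i j)]
    simpa [div_eq_inv_mul] using (h i j).trans (le_abs_self _)
  rw [← NNReal.coe_le_coe, NNReal.coe_max, coe_nnnorm, coe_nnnorm, coe_nnnorm]
  calc ‖X‖ ≤ ‖(2⁻¹ : ℝ) • (P + Q)‖ := le_half_sum
    _ ≤ 2⁻¹ * (‖P‖ + ‖Q‖) := by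
      rw [norm_smul, Real.norm_of_nonneg (by norm_num)]
      gcongr
      exact norm_add_le P Q
    _ ≤ max ‖P‖ ‖Q‖ := by linarith [le_max_left ‖P‖ ‖Q‖, le_max_right ‖P‖ ‖Q‖]

variable [DecidableEq N]

lemma specRad_le_max_of_nnnorm_pow_le {X Y Z : Matrix N N ℝ}
    (h : ∀ n : ℕ, ‖X ^ n‖₊ ≤ max ‖Y ^ n‖₊ ‖Z ^ n‖₊) :
    specRad X ≤ max (specRad Y) (specRad Z) := by
  unfold specRad
  rw [← ENNReal.toReal_max (spectralRadius_ne_top _) (spectralRadius_ne_top _)]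
  refine ENNReal.toReal_mono (max_ne_top (spectralRadius_ne_top _) (spectralRadius_ne_top _))
    (spectralRadius_le_max_of_nnnorm_pow_le fun n => ?_)
  have map_pow_eq (W : Matrix N N ℝ) : W.map Complex.ofReal ^ n = (W ^ n).map Complex.ofReal :=
    (map_pow Complex.ofRealHom.mapMatrix W n).symm
  simpa only [map_pow_eq, linfty_opNNNorm_map_ofReal] using h n

lemma specRad_le_specRad_of_le {X Y : Matrix N N ℝ} (hX : ∀ i j, 0 ≤ X i j)
    (hXY : ∀ i j, X i j ≤ Y i j) : specRad X ≤ specRad Y := by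
  refine (max_self (specRad Y)).le.trans' (specRad_le_max_of_nnnorm_pow_le fun n => ?_)
  rw [max_self]
  refine linfty_opNNNorm_mono fun i j => ?_
  have hXn := pow_apply_nonneg hX n i j
  have hXYn := pow_apply_le_pow_apply hX hXY n i j
  rw [← NNReal.coe_le_coe, coe_nnnorm, coe_nnnorm, Real.norm_of_nonneg hXn,
    Real.norm_of_nonneg (hXn.trans hXYn)]
  exact hXYn

lemma specRad_hadGeomMean_le {P Q : Matrix N N ℝ} (hP : ∀ i j, 0 ≤ P i j)
    (hQ : ∀ i j, 0 ≤ Q i j) : specRad (hadGeomMean P Q) ≤ max (specRad P) (specRad Q) :=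
  specRad_le_max_of_nnnorm_pow_le fun n =>
    linfty_opNNNorm_le_max_of_apply_le_add_div_two (pow_apply_nonneg (hadGeomMean_nonneg P Q) n)
      fun i j => (hadGeomMean_pow_apply_le hP hQ n i j).trans
        (hadGeomMean_apply_le_add_div_two (pow_apply_nonneg hP n) (pow_apply_nonneg hQ n) i j)

lemma specRad_hadGeomMean_transpose_le {M : Matrix N N ℝ} (hM : ∀ i j, 0 ≤ M i j) :
    specRad (hadGeomMean M Mᵀ) ≤ specRad M := by
  simpa only [specRad_transpose, max_self] using
    specRad_hadGeomMean_le (Q := Mᵀ) hM fun i j => hM j i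

end LinftyNorm

section L2Norm

open scoped Matrix.Norms.L2Operator

variable [DecidableEq N]

lemma l2OpNorm_le_norm_map_ofReal (C : Matrix N N ℝ) :
    l2OpNorm C ≤ ‖C.map Complex.ofReal‖ := by
  refine ContinuousLinearMap.opNorm_le_bound _ (norm_nonneg _) fun v => ?_
  have norm_complexify (w : N → ℝ) : ‖(WithLp.toLp 2 fun i => (w i : ℂ) : EuclideanSpace ℂ N)‖ =
      ‖(WithLp.toLp 2 w : EuclideanSpace ℝ N)‖ := by
    simp [EuclideanSpace.norm_eq]
  have mulVec_complexify : C.map Complex.ofReal *ᵥ (fun i => (v i : ℂ)) =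
      fun i => ((C *ᵥ v) i : ℂ) :=
    funext fun i => (Complex.ofRealHom.map_mulVec C v i).symm
  have := (toEuclideanCLM (𝕜 := ℂ) (C.map Complex.ofReal)).le_opNorm
    (WithLp.toLp 2 fun i => (v i : ℂ))
  rwa [toEuclideanCLM_toLp, mulVec_complexify, norm_complexify, norm_complexify] at this

lemma l2OpNorm_sq_le_specRad (C : Matrix N N ℝ) : l2OpNorm C ^ 2 ≤ specRad (Cᵀ * C) := by
  set Cc := C.map Complex.ofReal
  have gram_map : (Cᵀ * C).map Complex.ofReal = star Cc * Cc := by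
    ext i j
    simp [Cc, mul_apply]
  rw [specRad, gram_map, (IsSelfAdjoint.star_mul_self Cc).toReal_spectralRadius_complex_eq_norm,
    CStarRing.norm_star_mul_self, ← sq]
  exact pow_le_pow_left₀ (norm_nonneg _) (l2OpNorm_le_norm_map_ofReal C) 2

end L2Norm

end Matrix

theorem stmt13 {N : Type*} [Fintype N] [DecidableEq N] (A B : Matrix N N ℝ)
    (hA : ∀ i j, 0 ≤ A i j) (hB : ∀ i j, 0 ≤ B i j) :
    l2OpNorm (hadPow A (1/2) ⊙ hadPow B (1/2)) ≤
        specRad (hadPow (Aᵀ * B) (1/2) ⊙ hadPow (Bᵀ * A) (1/2)) ^ ((1 : ℝ) / 2) ∧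
      specRad (hadPow (Aᵀ * B) (1/2) ⊙ hadPow (Bᵀ * A) (1/2)) ^ ((1 : ℝ) / 2) ≤
        specRad (Aᵀ * B) ^ ((1 : ℝ) / 2) := by
  change l2OpNorm (hadGeomMean A B) ≤ specRad (hadGeomMean (Aᵀ * B) (Bᵀ * A)) ^ ((1 : ℝ) / 2) ∧
    specRad (hadGeomMean (Aᵀ * B) (Bᵀ * A)) ^ ((1 : ℝ) / 2) ≤ specRad (Aᵀ * B) ^ ((1 : ℝ) / 2)
  have hAt : ∀ i j, 0 ≤ Aᵀ i j := fun i j => hA j i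
  have hBt : ∀ i j, 0 ≤ Bᵀ i j := fun i j => hB j i
  have gram_le : ∀ i j, ((hadGeomMean A B)ᵀ * hadGeomMean A B) i j ≤
      hadGeomMean (Aᵀ * B) (Bᵀ * A) i j := by
    rw [hadGeomMean_transpose, hadGeomMean_comm A B]
    exact mul_hadGeomMean_apply_le hAt hBt hB hA
  have norm_sq_le : l2OpNorm (hadGeomMean A B) ^ 2 ≤ specRad (hadGeomMean (Aᵀ * B) (Bᵀ * A)) :=
    (l2OpNorm_sq_le_specRad _).trans (specRad_le_specRad_of_le
      (mul_apply_nonneg (hadGeomMean_nonneg _ _) (hadGeomMean_nonneg _ _)) gram_le)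
  have specRad_le : specRad (hadGeomMean (Aᵀ * B) (Bᵀ * A)) ≤ specRad (Aᵀ * B) := by
    simpa only [transpose_mul, transpose_transpose] using
      specRad_hadGeomMean_transpose_le (mul_apply_nonneg hAt hB)
  simp only [← Real.sqrt_eq_rpow]
  exact ⟨Real.le_sqrt_of_sq_le norm_sq_le, Real.sqrt_le_sqrt specRad_le⟩
end

section
/- Let A and B be nonnegative n×n real matrices and α ≥ 1/3. Then ‖A^{(α)} ∘ (Bᵀ)^{(α)} ∘ A^{(α)}‖ ≤ ρ((AᵀBᵀAᵀABA)^{(α)} ∘ (BAAᵀBᵀAᵀA)^{(α)} ∘ (AᵀABAAᵀBᵀ)^{(α)})^{1/6} ≤ ‖ABA‖^α, where ‖·‖ is the Euclidean operator norm. -/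
open Matrix

/-!
Write `C = A^(α) ∘ (Bᵀ)^(α) ∘ A^(α)`, so `C = (A ∘ Bᵀ ∘ A)^(α)` entrywise, and call an entrywise
bound `D ≤ (P ∘ Q ∘ R)^(α)` between nonnegative matrices a Hadamard power bound. For `α ≥ 1/3`,
Hölder's inequality for three sequences shows that such bounds multiply: from bounds for
`D, D'` one gets a bound for `D D'` by the slotwise products. Multiplying six bounds for
`Cᵀ, C, …, C` gives `(Cᵀ C)³ ≤ H` entrywise, where `H` is the middle Hadamard product, hence
`‖C‖⁶ = ρ(Cᵀ C)³ ≤ ρ((Cᵀ C)³) ≤ ρ(H)` by monotonicity of `ρ` on nonnegative matrices.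
Conversely, Gelfand's formula in the max-row-sum norm turns the bound of `H` by its three
factors `M₁, M₂, M₃` into `ρ(H) ≤ (ρ(M₁) ρ(M₂) ρ(M₃))^α`; each `Mᵢ` is a cyclic rearrangement
of `(ABA)ᵀ(ABA)`, so `ρ(Mᵢ) = ‖ABA‖²`.
-/

open Filter Topology Finset

theorem Real.sum_rpow_le_rpow_sum {ι : Type*} (s : Finset ι) {f : ι → ℝ} (hf : ∀ i ∈ s, 0 ≤ f i)
    {p : ℝ} (hp : 1 ≤ p) : ∑ i ∈ s, f i ^ p ≤ (∑ i ∈ s, f i) ^ p := by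
  classical
  induction s using Finset.induction with
  | empty => simp [Real.zero_rpow (by positivity : p ≠ 0)]
  | insert a s ha ih =>
    simp only [Finset.forall_mem_insert] at hf
    rw [sum_insert ha, sum_insert ha]
    calc f a ^ p + ∑ i ∈ s, f i ^ p ≤ f a ^ p + (∑ i ∈ s, f i) ^ p := by grw [ih hf.2]
      _ ≤ _ := Real.add_rpow_le_rpow_add hf.1 (sum_nonneg hf.2) hp

theorem Real.sum_rpow_one_third_mul_mul_le {ι : Type*} (s : Finset ι) {f g h : ι → ℝ}
    (hf : ∀ i ∈ s, 0 ≤ f i) (hg : ∀ i ∈ s, 0 ≤ g i) (hh : ∀ i ∈ s, 0 ≤ h i) :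
    ∑ i ∈ s, (f i * g i * h i) ^ (1 / 3 : ℝ) ≤
      ((∑ i ∈ s, f i) * (∑ i ∈ s, g i) * (∑ i ∈ s, h i)) ^ (1 / 3 : ℝ) := by
  have hG := sum_nonneg hg
  have hH := sum_nonneg hh
  have hgh : ∑ i ∈ s, (g i * h i) ^ (1 / 2 : ℝ) ≤
      ((∑ i ∈ s, g i) * ∑ i ∈ s, h i) ^ (1 / 2 : ℝ) := by
    rw [Real.mul_rpow hG hH]
    simpa using Real.Lr_rpow_le_Lp_mul_Lq_of_nonneg s (p := 1) (q := 1) (r := 1 / 2)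
      ⟨by norm_num, by norm_num, by norm_num⟩ hg hh
  calc ∑ i ∈ s, (f i * g i * h i) ^ (1 / 3 : ℝ)
      = ∑ i ∈ s, (f i * (g i * h i)) ^ (1 / 3 : ℝ) := by simp only [mul_assoc]
    _ ≤ (∑ i ∈ s, f i) ^ (1 / 3 : ℝ) * (∑ i ∈ s, (g i * h i) ^ (1 / 2 : ℝ)) ^ (2 / 3 : ℝ) := by
        convert Real.Lr_rpow_le_Lp_mul_Lq_of_nonneg s (p := 1) (q := 1 / 2) (r := 1 / 3)
          ⟨by norm_num, by norm_num, by norm_num⟩ hf (fun i hi => mul_nonneg (hg i hi) (hh i hi))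
          using 3 <;> norm_num
    _ ≤ (∑ i ∈ s, f i) ^ (1 / 3 : ℝ) *
          (((∑ i ∈ s, g i) * ∑ i ∈ s, h i) ^ (1 / 2 : ℝ)) ^ (2 / 3 : ℝ) := by
        gcongr
        · exact Real.rpow_nonneg (sum_nonneg hf) _
        · exact sum_nonneg fun i hi => Real.rpow_nonneg (mul_nonneg (hg i hi) (hh i hi)) _
    _ = _ := by
        rw [← Real.rpow_mul (by positivity), mul_assoc,
          Real.mul_rpow (sum_nonneg hf) (by positivity)]
        norm_num

theorem Real.sum_rpow_mul_mul_le {ι : Type*} (s : Finset ι) {f g h : ι → ℝ}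
    (hf : ∀ i ∈ s, 0 ≤ f i) (hg : ∀ i ∈ s, 0 ≤ g i) (hh : ∀ i ∈ s, 0 ≤ h i) {α : ℝ}
    (hα : 1 / 3 ≤ α) :
    ∑ i ∈ s, (f i * g i * h i) ^ α ≤ ((∑ i ∈ s, f i) * (∑ i ∈ s, g i) * (∑ i ∈ s, h i)) ^ α := by
  have hfgh : ∀ i ∈ s, 0 ≤ f i * g i * h i := fun i hi =>
    mul_nonneg (mul_nonneg (hf i hi) (hg i hi)) (hh i hi)
  have hFGH : 0 ≤ (∑ i ∈ s, f i) * (∑ i ∈ s, g i) * (∑ i ∈ s, h i) :=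
    mul_nonneg (mul_nonneg (sum_nonneg hf) (sum_nonneg hg)) (sum_nonneg hh)
  have hcube : ∀ x : ℝ, 0 ≤ x → x ^ α = (x ^ (1 / 3 : ℝ)) ^ (3 * α) := fun x hx => by
    rw [← Real.rpow_mul hx]; ring_nf
  calc ∑ i ∈ s, (f i * g i * h i) ^ α
      = ∑ i ∈ s, ((f i * g i * h i) ^ (1 / 3 : ℝ)) ^ (3 * α) :=
        sum_congr rfl fun i hi => hcube _ (hfgh i hi)
    _ ≤ (∑ i ∈ s, (f i * g i * h i) ^ (1 / 3 : ℝ)) ^ (3 * α) :=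
        Real.sum_rpow_le_rpow_sum s (fun i hi => Real.rpow_nonneg (hfgh i hi) _) (by linarith)
    _ ≤ (((∑ i ∈ s, f i) * (∑ i ∈ s, g i) * (∑ i ∈ s, h i)) ^ (1 / 3 : ℝ)) ^ (3 * α) := by
        gcongr
        · exact sum_nonneg fun i hi => Real.rpow_nonneg (hfgh i hi) _
        · exact Real.sum_rpow_one_third_mul_mul_le s hf hg hh
    _ = _ := (hcube _ hFGH).symm

theorem spectralRadius_mul_comm {𝕜 A : Type*} [NormedField 𝕜] [Ring A] [Algebra 𝕜 A] (a b : A) :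
    spectralRadius 𝕜 (a * b) = spectralRadius 𝕜 (b * a) := by
  suffices ∀ x y : A, spectralRadius 𝕜 (x * y) ≤ spectralRadius 𝕜 (y * x) from
    le_antisymm (this a b) (this b a)
  intro x y
  refine iSup₂_le fun k hk => ?_
  rcases eq_or_ne k 0 with rfl | hk0
  · simp
  · exact le_iSup₂_of_le k (spectrum.unit_mem_mul_comm (r := Units.mk0 k hk0) |>.mp hk) le_rfl

theorem EuclideanSpace.norm_le_norm_of_forall_norm_le {n 𝕜 𝕜' : Type*} [Fintype n] [RCLike 𝕜]
    [RCLike 𝕜'] {x : EuclideanSpace 𝕜 n} {y : EuclideanSpace 𝕜' n} (h : ∀ i, ‖x i‖ ≤ ‖y i‖) :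
    ‖x‖ ≤ ‖y‖ := by
  rw [EuclideanSpace.norm_eq, EuclideanSpace.norm_eq]
  gcongr with i
  exact h i

namespace Matrix

variable {l m n : Type*}

theorem mul_apply_nonneg_s18 [Fintype m] {R : Type*} [Semiring R] [PartialOrder R] [IsOrderedRing R]
    {A : Matrix l m R} {B : Matrix m n R} (hA : ∀ i j, 0 ≤ A i j) (hB : ∀ i j, 0 ≤ B i j) :
    ∀ i j, 0 ≤ (A * B) i j := fun i j =>
  sum_nonneg fun k _ => mul_nonneg (hA i k) (hB k j)

theorem pow_apply_le_pow_apply_s18 [Fintype m] [DecidableEq m] {R : Type*} [Semiring R]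
    [PartialOrder R] [IsOrderedRing R] {A B : Matrix m m R} (hA : ∀ i j, 0 ≤ A i j)
    (hAB : ∀ i j, A i j ≤ B i j) (k : ℕ) : ∀ i j, (A ^ k) i j ≤ (B ^ k) i j := by
  induction k with
  | zero => exact fun i j => le_rfl
  | succ k ih =>
    intro i j
    rw [pow_succ, pow_succ, mul_apply, mul_apply]
    exact sum_le_sum fun r _ => mul_le_mul (ih i r) (hAB r j) (hA r j)
      ((pow_apply_nonneg hA k i r).trans (ih i r))

theorem map_ofReal_mul [Fintype m] (A : Matrix l m ℝ) (B : Matrix m n ℝ) :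
    (A * B).map Complex.ofReal = A.map Complex.ofReal * B.map Complex.ofReal :=
  Matrix.map_mul (f := Complex.ofRealHom)

theorem map_ofReal_pow [Fintype m] [DecidableEq m] (A : Matrix m m ℝ) (k : ℕ) :
    (A ^ k).map Complex.ofReal = A.map Complex.ofReal ^ k :=
  Matrix.map_pow A Complex.ofRealHom k

theorem one_apply_nonneg [DecidableEq m] {R : Type*} [Semiring R] [PartialOrder R]
    [IsOrderedRing R] (i j : m) : 0 ≤ (1 : Matrix m m R) i j := by
  rw [one_apply]
  split_ifs <;> simp

structure IsHadamardRpowBound (α : ℝ) (D P Q R : Matrix m m ℝ) : Prop where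
  nonneg : ∀ i j, 0 ≤ D i j
  nonneg_left : ∀ i j, 0 ≤ P i j
  nonneg_mid : ∀ i j, 0 ≤ Q i j
  nonneg_right : ∀ i j, 0 ≤ R i j
  le : ∀ i j, D i j ≤ (P i j * Q i j * R i j) ^ α

theorem hadPow_hadamard_hadamard_apply {P Q R : Matrix m m ℝ} (hP : ∀ i j, 0 ≤ P i j)
    (hQ : ∀ i j, 0 ≤ Q i j) (hR : ∀ i j, 0 ≤ R i j) (α : ℝ) (i j : m) :
    (hadPow P α ⊙ hadPow Q α ⊙ hadPow R α) i j = (P i j * Q i j * R i j) ^ α := by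
  rw [Real.mul_rpow (mul_nonneg (hP i j) (hQ i j)) (hR i j), Real.mul_rpow (hP i j) (hQ i j)]
  rfl

theorem isHadamardRpowBound_hadPow_hadamard {α : ℝ} {P Q R : Matrix m m ℝ}
    (hP : ∀ i j, 0 ≤ P i j) (hQ : ∀ i j, 0 ≤ Q i j) (hR : ∀ i j, 0 ≤ R i j) :
    IsHadamardRpowBound α (hadPow P α ⊙ hadPow Q α ⊙ hadPow R α) P Q R where
  nonneg i j := by
    rw [hadPow_hadamard_hadamard_apply hP hQ hR]
    exact Real.rpow_nonneg (mul_nonneg (mul_nonneg (hP i j) (hQ i j)) (hR i j)) α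
  nonneg_left := hP
  nonneg_mid := hQ
  nonneg_right := hR
  le i j := (hadPow_hadamard_hadamard_apply hP hQ hR α i j).le

namespace IsHadamardRpowBound

variable {α : ℝ} {D P Q R : Matrix m m ℝ}

theorem mul_mul_nonneg (h : IsHadamardRpowBound α D P Q R) (i j : m) :
    0 ≤ P i j * Q i j * R i j :=
  mul_nonneg (mul_nonneg (h.nonneg_left i j) (h.nonneg_mid i j)) (h.nonneg_right i j)

theorem le_hadPow_hadamard (h : IsHadamardRpowBound α D P Q R) (i j : m) :
    D i j ≤ (hadPow P α ⊙ hadPow Q α ⊙ hadPow R α) i j :=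
  (h.le i j).trans_eq
    (hadPow_hadamard_hadamard_apply h.nonneg_left h.nonneg_mid h.nonneg_right α i j).symm

theorem rotate (h : IsHadamardRpowBound α D P Q R) : IsHadamardRpowBound α D Q R P where
  nonneg := h.nonneg
  nonneg_left := h.nonneg_mid
  nonneg_mid := h.nonneg_right
  nonneg_right := h.nonneg_left
  le i j := (h.le i j).trans_eq (by ring_nf)

theorem transpose (h : IsHadamardRpowBound α D P Q R) :
    IsHadamardRpowBound α Dᵀ Pᵀ Qᵀ Rᵀ where
  nonneg i j := h.nonneg j i
  nonneg_left i j := h.nonneg_left j i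
  nonneg_mid i j := h.nonneg_mid j i
  nonneg_right i j := h.nonneg_right j i
  le i j := h.le j i

theorem one [DecidableEq m] : IsHadamardRpowBound α (1 : Matrix m m ℝ) 1 1 1 where
  nonneg := one_apply_nonneg
  nonneg_left := one_apply_nonneg
  nonneg_mid := one_apply_nonneg
  nonneg_right := one_apply_nonneg
  le i j := by
    rcases eq_or_ne i j with rfl | hij
    · simp
    · simp [one_apply_ne hij, Real.rpow_nonneg]

variable [Fintype m]

theorem mul (hα : 1 / 3 ≤ α) {D' P' Q' R' : Matrix m m ℝ} (h : IsHadamardRpowBound α D P Q R)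
    (h' : IsHadamardRpowBound α D' P' Q' R') :
    IsHadamardRpowBound α (D * D') (P * P') (Q * Q') (R * R') where
  nonneg := mul_apply_nonneg_s18 h.nonneg h'.nonneg
  nonneg_left := mul_apply_nonneg_s18 h.nonneg_left h'.nonneg_left
  nonneg_mid := mul_apply_nonneg_s18 h.nonneg_mid h'.nonneg_mid
  nonneg_right := mul_apply_nonneg_s18 h.nonneg_right h'.nonneg_right
  le i j := by
    simp only [mul_apply]
    calc ∑ k, D i k * D' k j
        ≤ ∑ k, ((P i k * P' k j) * (Q i k * Q' k j) * (R i k * R' k j)) ^ α := by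
          refine sum_le_sum fun k _ => ?_
          calc D i k * D' k j
              ≤ (P i k * Q i k * R i k) ^ α * (P' k j * Q' k j * R' k j) ^ α :=
                mul_le_mul (h.le i k) (h'.le k j) (h'.nonneg k j)
                  (Real.rpow_nonneg (h.mul_mul_nonneg i k) α)
            _ = _ := by
                rw [← Real.mul_rpow (h.mul_mul_nonneg i k) (h'.mul_mul_nonneg k j)]
                ring_nf
      _ ≤ _ := Real.sum_rpow_mul_mul_le _
          (fun k _ => mul_nonneg (h.nonneg_left i k) (h'.nonneg_left k j))
          (fun k _ => mul_nonneg (h.nonneg_mid i k) (h'.nonneg_mid k j))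
          (fun k _ => mul_nonneg (h.nonneg_right i k) (h'.nonneg_right k j)) hα

theorem pow [DecidableEq m] (hα : 1 / 3 ≤ α) (h : IsHadamardRpowBound α D P Q R) (k : ℕ) :
    IsHadamardRpowBound α (D ^ k) (P ^ k) (Q ^ k) (R ^ k) := by
  induction k with
  | zero => exact one
  | succ k ih => simpa only [pow_succ] using ih.mul hα h

/-- The six factors of `(Cᵀ C)³` are bounded through the cyclic rotations of `(A, Bᵀ, A)` and
their transposes, arranged so that the slotwise products spell out the three matrices. -/
theorem transpose_mul_self_pow_three [DecidableEq m] (hα : 1 / 3 ≤ α) {A B C : Matrix m m ℝ}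
    (hC : IsHadamardRpowBound α C A Bᵀ A) :
    IsHadamardRpowBound α ((Cᵀ * C) ^ 3) (Aᵀ * Bᵀ * Aᵀ * A * B * A) (B * A * Aᵀ * Bᵀ * Aᵀ * A)
      (Aᵀ * A * B * A * Aᵀ * Bᵀ) := by
  have hC' := hC.rotate
  have hC'' := hC'.rotate
  have := ((((hC.transpose.mul hα hC').mul hα hC''.transpose).mul hα hC).mul hα
    hC'.transpose).mul hα hC''
  simpa only [transpose_transpose, pow_succ, pow_zero, one_mul, Matrix.mul_assoc] using this

end IsHadamardRpowBound

end Matrix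

section LinftyOpNorm

attribute [local instance] Matrix.linftyOpSeminormedAddCommGroup
  Matrix.linftyOpNormedAddCommGroup Matrix.linftyOpNormedRing Matrix.linftyOpNormedAlgebra

namespace Matrix

variable {m n : Type*} [Fintype m] [Fintype n]

theorem linfty_opNorm_le_iff {α : Type*} [SeminormedAddCommGroup α] (A : Matrix m n α) {c : ℝ}
    (hc : 0 ≤ c) : ‖A‖ ≤ c ↔ ∀ i, ∑ j, ‖A i j‖ ≤ c := by
  lift c to NNReal using hc
  simp only [linfty_opNorm_def, NNReal.coe_le_coe, Finset.sup_le_iff, Finset.mem_univ,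
    true_implies]
  simp [← NNReal.coe_le_coe]

theorem sum_norm_le_linfty_opNorm {α : Type*} [SeminormedAddCommGroup α] (A : Matrix m n α)
    (i : m) : ∑ j, ‖A i j‖ ≤ ‖A‖ :=
  (linfty_opNorm_le_iff A (norm_nonneg A)).1 le_rfl i

theorem sum_le_linfty_opNorm (A : Matrix m n ℝ) (i : m) : ∑ j, A i j ≤ ‖A‖ :=
  (sum_le_sum fun j _ => Real.le_norm_self (A i j)).trans (sum_norm_le_linfty_opNorm A i)

theorem linfty_opNorm_mono {α β : Type*} [SeminormedAddCommGroup α] [SeminormedAddCommGroup β]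
    {A : Matrix m n α} {B : Matrix m n β} (h : ∀ i j, ‖A i j‖ ≤ ‖B i j‖) : ‖A‖ ≤ ‖B‖ :=
  (linfty_opNorm_le_iff A (norm_nonneg B)).2 fun i =>
    (sum_le_sum fun j _ => h i j).trans (sum_norm_le_linfty_opNorm B i)

theorem linfty_opNorm_map_ofReal (A : Matrix m n ℝ) : ‖A.map Complex.ofReal‖ = ‖A‖ := by
  simp [linfty_opNorm_def]

theorem IsHadamardRpowBound.linfty_opNorm_le {α : ℝ} (hα : 1 / 3 ≤ α) {D P Q R : Matrix m m ℝ}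
    (h : IsHadamardRpowBound α D P Q R) : ‖D‖ ≤ (‖P‖ * ‖Q‖ * ‖R‖) ^ α := by
  refine (linfty_opNorm_le_iff D (by positivity)).2 fun i => ?_
  calc ∑ j, ‖D i j‖ = ∑ j, D i j := sum_congr rfl fun j _ => Real.norm_of_nonneg (h.nonneg i j)
    _ ≤ ∑ j, (P i j * Q i j * R i j) ^ α := sum_le_sum fun j _ => h.le i j
    _ ≤ ((∑ j, P i j) * (∑ j, Q i j) * (∑ j, R i j)) ^ α :=
        Real.sum_rpow_mul_mul_le _ (fun j _ => h.nonneg_left i j) (fun j _ => h.nonneg_mid i j)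
          (fun j _ => h.nonneg_right i j) hα
    _ ≤ (‖P‖ * ‖Q‖ * ‖R‖) ^ α := by
        have := sum_nonneg fun j (_ : j ∈ univ) => h.nonneg_left i j
        have := sum_nonneg fun j (_ : j ∈ univ) => h.nonneg_mid i j
        have := sum_nonneg fun j (_ : j ∈ univ) => h.nonneg_right i j
        gcongr <;> exact sum_le_linfty_opNorm _ i

end Matrix

variable {N : Type*} [Fintype N] [DecidableEq N]

theorem spectralRadius_map_ofReal_ne_top (M : Matrix N N ℝ) :
    spectralRadius ℂ (M.map Complex.ofReal) ≠ ⊤ :=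
  ne_top_of_le_ne_top (by simp [ENNReal.mul_eq_top])
    (spectrum.spectralRadius_le_pow_nnnorm_pow_one_div ℂ (M.map Complex.ofReal) 0)

theorem tendsto_linfty_opNorm_pow_specRad (M : Matrix N N ℝ) :
    Tendsto (fun k : ℕ => ‖M ^ k‖ ^ (1 / k : ℝ)) atTop (𝓝 (specRad M)) := by
  refine ((ENNReal.tendsto_toReal (spectralRadius_map_ofReal_ne_top M)).comp
    (spectrum.pow_norm_pow_one_div_tendsto_nhds_spectralRadius (M.map Complex.ofReal))).congr
    fun k => ?_
  rw [Function.comp_apply, ← map_ofReal_pow, linfty_opNorm_map_ofReal]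
  exact ENNReal.toReal_ofReal (by positivity)

theorem specRad_mono {P Q : Matrix N N ℝ} (hP : ∀ i j, 0 ≤ P i j) (hPQ : ∀ i j, P i j ≤ Q i j) :
    specRad P ≤ specRad Q := by
  refine le_of_tendsto_of_tendsto' (tendsto_linfty_opNorm_pow_specRad P)
    (tendsto_linfty_opNorm_pow_specRad Q) fun k => ?_
  refine Real.rpow_le_rpow (norm_nonneg _) (linfty_opNorm_mono fun i j => ?_) (by positivity)
  simpa only [Real.norm_eq_abs] using
    abs_le_abs_of_nonneg (pow_apply_nonneg hP k i j) (pow_apply_le_pow_apply_s18 hP hPQ k i j)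

theorem specRad_le_of_isHadamardRpowBound {α : ℝ} (hα : 1 / 3 ≤ α) {D P Q R : Matrix N N ℝ}
    (h : IsHadamardRpowBound α D P Q R) :
    specRad D ≤ (specRad P * specRad Q * specRad R) ^ α := by
  have hα0 : 0 ≤ α := by linarith
  refine le_of_tendsto_of_tendsto' (tendsto_linfty_opNorm_pow_specRad D)
    ((((tendsto_linfty_opNorm_pow_specRad P).mul (tendsto_linfty_opNorm_pow_specRad Q)).mul
      (tendsto_linfty_opNorm_pow_specRad R)).rpow_const (Or.inr hα0)) fun k => ?_
  calc ‖D ^ k‖ ^ (1 / k : ℝ) ≤ ((‖P ^ k‖ * ‖Q ^ k‖ * ‖R ^ k‖) ^ α) ^ (1 / k : ℝ) :=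
        Real.rpow_le_rpow (norm_nonneg _) ((h.pow hα k).linfty_opNorm_le hα) (by positivity)
    _ = _ := by
        rw [← Real.rpow_mul (by positivity), mul_comm α, Real.rpow_mul (by positivity)]
        congr 1
        rw [Real.mul_rpow (by positivity) (by positivity),
          Real.mul_rpow (by positivity) (by positivity)]

end LinftyOpNorm

section

variable {N : Type*} [Fintype N] [DecidableEq N]

theorem l2OpNorm_nonneg (M : Matrix N N ℝ) : 0 ≤ l2OpNorm M :=
  norm_nonneg _

theorem specRad_mul_comm (X Y : Matrix N N ℝ) : specRad (X * Y) = specRad (Y * X) := by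
  rw [specRad, specRad, map_ofReal_mul, map_ofReal_mul, spectralRadius_mul_comm]

theorem specRad_pow_le (M : Matrix N N ℝ) {k : ℕ} (hk : k ≠ 0) :
    specRad M ^ k ≤ specRad (M ^ k) := by
  rw [specRad, specRad, ← ENNReal.toReal_pow]
  refine ENNReal.toReal_mono (spectralRadius_map_ofReal_ne_top (M ^ k)) ?_
  rw [map_ofReal_pow]
  exact spectrum.spectralRadius_pow_le _ k hk

section

open scoped Matrix.Norms.L2Operator

theorem specRad_transpose_mul_self (M : Matrix N N ℝ) :
    specRad (Mᵀ * M) = ‖M.map Complex.ofReal‖ ^ 2 := by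
  have h : (Mᵀ * M).map Complex.ofReal = star (M.map Complex.ofReal) * M.map Complex.ofReal := by
    ext i j
    simp [Matrix.mul_apply]
  rw [specRad, h, (IsSelfAdjoint.star_mul_self _).spectralRadius_eq_nnnorm,
    CStarRing.nnnorm_star_mul_self]
  simp [sq]

/-- For a nonnegative matrix, `|M x| ≤ M |x|` coordinatewise, so complex vectors do not see a
larger norm than real ones. -/
theorem norm_map_ofReal_eq_l2OpNorm {M : Matrix N N ℝ} (hM : ∀ i j, 0 ≤ M i j) :
    ‖M.map Complex.ofReal‖ = l2OpNorm M := by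
  rw [l2OpNorm, ← l2_opNorm_toEuclideanCLM]
  apply le_antisymm
  · refine ContinuousLinearMap.opNorm_le_bound _ (norm_nonneg _) fun x => ?_
    let y : EuclideanSpace ℝ N := WithLp.toLp 2 fun j => ‖x j‖
    have hy : ‖y‖ = ‖x‖ := by simp [y, EuclideanSpace.norm_eq]
    calc ‖toEuclideanCLM (𝕜 := ℂ) (M.map Complex.ofReal) x‖
        ≤ ‖toEuclideanCLM (𝕜 := ℝ) M y‖ := by
          refine EuclideanSpace.norm_le_norm_of_forall_norm_le fun i => ?_
          simp only [ofLp_toEuclideanCLM, mulVec, dotProduct, map_apply, y]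
          refine (norm_sum_le _ _).trans (le_of_eq_of_le ?_ (Real.le_norm_self _))
          simp [abs_of_nonneg (hM _ _)]
      _ ≤ ‖toEuclideanCLM (𝕜 := ℝ) M‖ * ‖x‖ := hy ▸ ContinuousLinearMap.le_opNorm _ _
  · refine ContinuousLinearMap.opNorm_le_bound _ (norm_nonneg _) fun x => ?_
    let z : EuclideanSpace ℂ N := WithLp.toLp 2 fun j => (x j : ℂ)
    have hz : ‖z‖ = ‖x‖ := by simp [z, EuclideanSpace.norm_eq]
    calc ‖toEuclideanCLM (𝕜 := ℝ) M x‖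
        ≤ ‖toEuclideanCLM (𝕜 := ℂ) (M.map Complex.ofReal) z‖ := by
          refine EuclideanSpace.norm_le_norm_of_forall_norm_le fun i => ?_
          simp [mulVec, dotProduct, z, ← Complex.ofReal_mul, ← Complex.ofReal_sum]
      _ ≤ _ := hz ▸ ContinuousLinearMap.le_opNorm _ _

theorem specRad_transpose_mul_self_of_nonneg {M : Matrix N N ℝ} (hM : ∀ i j, 0 ≤ M i j) :
    specRad (Mᵀ * M) = l2OpNorm M ^ 2 := by
  rw [specRad_transpose_mul_self, norm_map_ofReal_eq_l2OpNorm hM]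

end

theorem l2OpNorm_pow_six_le_specRad {C H : Matrix N N ℝ}
    (hC : ∀ i j, 0 ≤ C i j) (hCH : ∀ i j, ((Cᵀ * C) ^ 3) i j ≤ H i j) :
    l2OpNorm C ^ 6 ≤ specRad H := calc
  l2OpNorm C ^ 6 = specRad (Cᵀ * C) ^ 3 := by
    rw [specRad_transpose_mul_self_of_nonneg hC]; ring
  _ ≤ specRad ((Cᵀ * C) ^ 3) := specRad_pow_le _ (by norm_num)
  _ ≤ specRad H :=
    specRad_mono (pow_apply_nonneg (mul_apply_nonneg_s18 (fun i j => hC j i) hC) 3) hCH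

theorem specRad_hadPow_le_l2OpNorm_pow {A B : Matrix N N ℝ}
    (hA : ∀ i j, 0 ≤ A i j) (hB : ∀ i j, 0 ≤ B i j) {α : ℝ} (hα : 1 / 3 ≤ α) :
    specRad (hadPow (Aᵀ * Bᵀ * Aᵀ * A * B * A) α ⊙ hadPow (B * A * Aᵀ * Bᵀ * Aᵀ * A) α ⊙
      hadPow (Aᵀ * A * B * A * Aᵀ * Bᵀ) α) ≤ (l2OpNorm (A * B * A) ^ 6) ^ α := by
  have hABA : ∀ i j, 0 ≤ (A * B * A) i j := mul_apply_nonneg_s18 (mul_apply_nonneg_s18 hA hB) hA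
  have hAt : ∀ i j, 0 ≤ Aᵀ i j := fun i j => hA j i
  have hBt : ∀ i j, 0 ≤ Bᵀ i j := fun i j => hB j i
  have h₁ : specRad (Aᵀ * Bᵀ * Aᵀ * A * B * A) = l2OpNorm (A * B * A) ^ 2 := by
    rw [← specRad_transpose_mul_self_of_nonneg hABA]
    simp only [transpose_mul, Matrix.mul_assoc]
  have h₂ : specRad (B * A * Aᵀ * Bᵀ * Aᵀ * A) = specRad (Aᵀ * Bᵀ * Aᵀ * A * B * A) := by
    simpa only [Matrix.mul_assoc] using specRad_mul_comm (B * A) (Aᵀ * Bᵀ * Aᵀ * A)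
  have h₃ : specRad (Aᵀ * A * B * A * Aᵀ * Bᵀ) = specRad (Aᵀ * Bᵀ * Aᵀ * A * B * A) := by
    simpa only [Matrix.mul_assoc] using specRad_mul_comm (Aᵀ * A * B * A) (Aᵀ * Bᵀ)
  obtain ⟨hM₁, hM₂, hM₃⟩ : (∀ i j, 0 ≤ (Aᵀ * Bᵀ * Aᵀ * A * B * A) i j) ∧
      (∀ i j, 0 ≤ (B * A * Aᵀ * Bᵀ * Aᵀ * A) i j) ∧
      (∀ i j, 0 ≤ (Aᵀ * A * B * A * Aᵀ * Bᵀ) i j) := by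
    refine ⟨?_, ?_, ?_⟩ <;> repeat' first | assumption | apply mul_apply_nonneg_s18
  calc _ ≤ _ :=
        specRad_le_of_isHadamardRpowBound hα (isHadamardRpowBound_hadPow_hadamard hM₁ hM₂ hM₃)
    _ = (l2OpNorm (A * B * A) ^ 6) ^ α := by rw [h₂, h₃, h₁]; ring_nf

end

theorem stmt18 {N : Type*} [Fintype N] [DecidableEq N] (A B : Matrix N N ℝ)
    (hA : ∀ i j, 0 ≤ A i j) (hB : ∀ i j, 0 ≤ B i j) (α : ℝ) (hα : (1:ℝ)/3 ≤ α) :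
    l2OpNorm (hadPow A α ⊙ hadPow Bᵀ α ⊙ hadPow A α) ≤
        specRad (hadPow (Aᵀ * Bᵀ * Aᵀ * A * B * A) α ⊙
            hadPow (B * A * Aᵀ * Bᵀ * Aᵀ * A) α ⊙
            hadPow (Aᵀ * A * B * A * Aᵀ * Bᵀ) α) ^ ((1 : ℝ) / 6) ∧
      specRad (hadPow (Aᵀ * Bᵀ * Aᵀ * A * B * A) α ⊙
            hadPow (B * A * Aᵀ * Bᵀ * Aᵀ * A) α ⊙
            hadPow (Aᵀ * A * B * A * Aᵀ * Bᵀ) α) ^ ((1 : ℝ) / 6) ≤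
        l2OpNorm (A * B * A) ^ α := by
  have hC : IsHadamardRpowBound α (hadPow A α ⊙ hadPow Bᵀ α ⊙ hadPow A α) A Bᵀ A :=
    isHadamardRpowBound_hadPow_hadamard hA (fun i j => hB j i) hA
  have hρ : 0 ≤ specRad (hadPow (Aᵀ * Bᵀ * Aᵀ * A * B * A) α ⊙
      hadPow (B * A * Aᵀ * Bᵀ * Aᵀ * A) α ⊙ hadPow (Aᵀ * A * B * A * Aᵀ * Bᵀ) α) :=
    ENNReal.toReal_nonneg
  rw [one_div]
  constructor
  · rw [Real.le_rpow_inv_iff_of_pos (l2OpNorm_nonneg _) hρ (by norm_num)]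
    exact_mod_cast l2OpNorm_pow_six_le_specRad hC.nonneg
      (hC.transpose_mul_self_pow_three hα).le_hadPow_hadamard
  · rw [Real.rpow_inv_le_iff_of_pos hρ (Real.rpow_nonneg (l2OpNorm_nonneg _) α) (by norm_num)]
    refine (specRad_hadPow_le_l2OpNorm_pow hA hB hα).trans_eq ?_
    rw [← Real.rpow_natCast, ← Real.rpow_mul (l2OpNorm_nonneg _),
      ← Real.rpow_mul (l2OpNorm_nonneg _), mul_comm]
    norm_num
end
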